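/- arXiv:1403.6686 — 2 statements merged into one kernel-verified Lean document; each statement's English description precedes it below -/
import Mathlib

section
/- Let A be an R-algebra, I ⊴ A an ideal, and (A, →) a normalizing rewrite system for A/I with set of normal forms N. Then N is a normal form of A/I (i.e., the restriction of the quotient map A → A/I to N is an R-module isomorphism) if and only if a ↠ 0 for all a ∈ I. -/
def RewriteIrreducible {A : Type*} (r : A → A → Prop) (a : A) : Prop :=
  ∀ b : A, r a b → b = a

def IsNormalFormOf {A : Type*} (r : A → A → Prop) (a b : A) : Prop :=
  Relation.ReflTransGen r a b ∧ RewriteIrreducible r b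

def NormalForms {A : Type*} (r : A → A → Prop) : Set A :=
  {b : A | ∃ a : A, IsNormalFormOf r a b}

private lemma sub_mem_of_rtg {A : Type*} [Ring A]
    (I : TwoSidedIdeal A) (r : A → A → Prop)
    (hstep : ∀ a b : A, r a b → a - b ∈ I) {a b : A}
    (h : Relation.ReflTransGen r a b) : a - b ∈ I := by
  induction h with
  | refl => simp
  | tail hab hbc ih =>
      have := I.add_mem ih (hstep _ _ hbc)
      simpa using this

private lemma irred_rtg_eq {A : Type*} (r : A → A → Prop) {a b : A}
    (hirr : RewriteIrreducible r a) (h : Relation.ReflTransGen r a b) : b = a := by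
  induction h with
  | refl => rfl
  | tail hab hbc ih => exact hirr _ (ih ▸ hbc)

/-- For a normalizing rewrite system for `A/I` with set of normal forms `N`
(an `R`-submodule of `A`), `N` is a normal form of `A/I` — i.e. the restriction
of the quotient map `A → A/I` to `N` is an isomorphism of `R`-modules, expressed
here as: every element of `A` is congruent mod `I` to a unique element of `N` —
if and only if `a ↠ 0` for all `a ∈ I`. -/
theorem normalForms_normal_form_iff {R A : Type*} [CommRing R] [Ring A] [Algebra R A]
    (I : TwoSidedIdeal A) (r : A → A → Prop)
    (hstep : ∀ a b : A, r a b → a - b ∈ I)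
    (hsmul : ∀ (c : R) (a : A), RewriteIrreducible r a → RewriteIrreducible r (c • a))
    (hadd : ∀ a b : A, RewriteIrreducible r a → RewriteIrreducible r b →
      RewriteIrreducible r (a + b))
    (hnorm : ∀ a : A, ∃ b : A, IsNormalFormOf r a b)
    (N : Submodule R A) (hN : (N : Set A) = NormalForms r) :
    ((∀ a : A, ∃ n ∈ N, a - n ∈ I) ∧
        (∀ n₁ ∈ N, ∀ n₂ ∈ N, n₁ - n₂ ∈ I → n₁ = n₂)) ↔
      (∀ a ∈ I, Relation.ReflTransGen r a 0) := by
  have hirrN : ∀ n ∈ N, RewriteIrreducible r n := by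
    intro n hn
    have : n ∈ (N : Set A) := hn
    rw [hN] at this
    obtain ⟨a, _, hirr⟩ := this
    exact hirr
  constructor
  · rintro ⟨_, huniq⟩ a ha
    obtain ⟨b, hab, hirr⟩ := hnorm a
    have hbN : b ∈ N := by
      have : b ∈ (N : Set A) := by rw [hN]; exact ⟨a, hab, hirr⟩
      exact this
    have hab' : a - b ∈ I := sub_mem_of_rtg I r hstep hab
    have hbI : b - 0 ∈ I := by
      have := I.sub_mem ha hab'
      simpa using this
    have := huniq b hbN 0 N.zero_mem hbI
    exact this ▸ hab
  · intro h
    constructor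
    · intro a
      obtain ⟨b, hab, hirr⟩ := hnorm a
      refine ⟨b, ?_, sub_mem_of_rtg I r hstep hab⟩
      have : b ∈ (N : Set A) := by rw [hN]; exact ⟨a, hab, hirr⟩
      exact this
    · intro n₁ hn₁ n₂ hn₂ hsub
      have hirr : RewriteIrreducible r (n₁ - n₂) := by
        have h2 := hsmul (-1 : R) n₂ (hirrN n₂ hn₂)
        rw [neg_one_smul] at h2
        have := hadd n₁ (-n₂) (hirrN n₁ hn₁) h2
        simpa [sub_eq_add_neg] using this
      have : (0 : A) = n₁ - n₂ := irred_rtg_eq r hirr (h _ hsub)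
      exact (sub_eq_zero.mp this.symm)
end

section
/- Let A be an R-algebra, I ⊴ A an ideal, and (A, →) a normalizing rewrite system for A/I such that a ↠ 0 for all a ∈ I. Then the rewrite system is uniquely normalizing: every element of A has a unique normal form. -/
/-- A normalizing rewrite system for `A/I` with `a ↠ 0` for all `a ∈ I` is
uniquely normalizing: every element of `A` has a unique normal form. -/
theorem uniquely_normalizing_of_ideal_to_zero {R A : Type*} [CommRing R] [Ring A]
    [Algebra R A] (I : TwoSidedIdeal A) (r : A → A → Prop)
    (hstep : ∀ a b : A, r a b → a - b ∈ I)
    (hsmul : ∀ (c : R) (a : A), RewriteIrreducible r a → RewriteIrreducible r (c • a))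
    (hadd : ∀ a b : A, RewriteIrreducible r a → RewriteIrreducible r b →
      RewriteIrreducible r (a + b))
    (hnorm : ∀ a : A, ∃ b : A, IsNormalFormOf r a b)
    (hzero : ∀ a ∈ I, Relation.ReflTransGen r a 0) :
    ∀ a : A, ∃! b : A, IsNormalFormOf r a b := by
  -- multi-step rewriting stays in the same coset mod I
  have hmem : ∀ a b : A, Relation.ReflTransGen r a b → a - b ∈ I := by
    intro a b h
    induction h with
    | refl => simpa using I.zero_mem
    | tail _ hbc ih =>
      rename_i x y _
      have := I.add_mem ih (hstep x y hbc)
      simpa using this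
  -- an irreducible element that rewrites to anything equals it
  have hirr_stay : ∀ b c : A, RewriteIrreducible r b → Relation.ReflTransGen r b c → c = b := by
    intro b c hb h
    induction h with
    | refl => rfl
    | tail _ hxy ih => rename_i x y _; rw [ih] at hxy; exact hb y hxy
  intro a
  obtain ⟨b, hb⟩ := hnorm a
  refine ⟨b, hb, ?_⟩
  intro c hc
  -- b - c ∈ I, so b - c ↠ 0, but b - c is irreducible, hence b - c = 0
  have hbc : c - b ∈ I := by
    have h1 := hmem a c hc.1
    have h2 := hmem a b hb.1
    have h3 := I.sub_mem h2 h1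
    have heq : (a - b) - (a - c) = c - b := by abel
    rwa [heq] at h3
  have hnegb : RewriteIrreducible r ((-1 : R) • b) := hsmul (-1) b hb.2
  have hirr : RewriteIrreducible r (c - b) := by
    have := hadd c ((-1 : R) • b) hc.2 hnegb
    simpa [sub_eq_add_neg, neg_one_smul] using this
  have h0 : (0 : A) = c - b := hirr_stay _ _ hirr (hzero _ hbc)
  exact sub_eq_zero.mp h0.symm
end
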